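/- For e = 18, the group acting on (ℤ/18ℤ)² generated by (a,b) ↦ (b+9, a+9) and (a,b) ↦ (18-a, b-a) has exactly 64 orbits. -/

import Mathlib

/-- `ρ(a,b) = (b+9, a+9)` on `(ℤ/18ℤ)²`. -/
def rhoPerm : Equiv.Perm (ZMod 18 × ZMod 18) :=
  Function.Involutive.toPerm (fun x => (x.2 + 9, x.1 + 9)) (fun x => by
    obtain ⟨a, b⟩ := x; simp [add_assoc]; decide)

/-- `τ(a,b) = (18-a, b-a)` on `(ℤ/18ℤ)²`. -/
def tauPerm : Equiv.Perm (ZMod 18 × ZMod 18) :=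
  Function.Involutive.toPerm (fun x => (-x.1, x.2 - x.1)) (fun x => by simp)

/-- The group generated by `ρ` and `τ`. -/
def Grt : Subgroup (Equiv.Perm (ZMod 18 × ZMod 18)) :=
  Subgroup.closure {rhoPerm, tauPerm}

/-!
`ρ` and `τ` are involutions with `ρτρ = τρτ` (this uses `9 = -9` in `ℤ/18ℤ`), so they generate
a copy of `S₃`: three reflections `τ, ρ, ρτρ` fixing 18 points each and two rotations `ρτ, τρ`
fixing 3 points each. Burnside's lemma gives `(324 + 3 • 18 + 2 • 3) / 6 = 64` orbits.
-/

open Finset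

theorem Subgroup.coe_closure_pair_of_braid {G : Type*} [Group G] {s t : G} (hs : s * s = 1)
    (ht : t * t = 1) (hst : s * t * s = t * s * t) :
    (closure {s, t} : Set G) = {1, s, t, s * t, t * s, s * t * s} := by
  have ht' (g : G) : g * t * t = g := by rw [mul_assoc, ht, mul_one]
  have hinv : s⁻¹ = s ∧ t⁻¹ = t :=
    ⟨inv_eq_of_mul_eq_one_right hs, inv_eq_of_mul_eq_one_right ht⟩
  apply subset_antisymm
  · intro g hg
    induction hg using closure_induction_left with
    | one => simp
    | mul_left x hx y _ ih =>
      rcases hx with rfl | rfl <;> rcases ih with rfl | rfl | rfl | rfl | rfl | rfl <;>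
        simp [← mul_assoc, hs, ht, ht', hst]
    | inv_mul_cancel x hx y _ ih =>
      rcases hx with rfl | rfl <;> rcases ih with rfl | rfl | rfl | rfl | rfl | rfl <;>
        simp [hinv, ← mul_assoc, hs, ht, ht', hst]
  · have hs_mem : s ∈ closure {s, t} := subset_closure (by simp)
    have ht_mem : t ∈ closure {s, t} := subset_closure (by simp)
    simp [Set.insert_subset_iff, mul_mem, hs_mem, ht_mem]

theorem Equiv.Perm.sum_card_fixed_eq_card_orbits_mul_card {α : Type*} [Fintype α]
    [DecidableEq α] {H : Subgroup (Perm α)} {S : Finset (Perm α)} (hS : ∀ p, p ∈ S ↔ p ∈ H) :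
    ∑ p ∈ S, #{x | p x = x} = Nat.card (MulAction.orbitRel.Quotient H α) * #S := by
  classical
  let _ : Fintype H := Fintype.subtype S hS
  rw [Nat.card_eq_fintype_card, ← Fintype.card_of_subtype S hS,
    ← MulAction.sum_card_fixedBy_eq_card_orbits_mul_card_group, Finset.sum_subtype S hS]
  refine Fintype.sum_congr _ _ fun g => ?_
  rw [Fintype.card_subtype]
  rfl

@[simp]
theorem rhoPerm_apply (x : ZMod 18 × ZMod 18) : rhoPerm x = (x.2 + 9, x.1 + 9) := rfl

@[simp]
theorem tauPerm_apply (x : ZMod 18 × ZMod 18) : tauPerm x = (-x.1, x.2 - x.1) := rfl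

theorem rhoPerm_mul_self : rhoPerm * rhoPerm = 1 := by
  ext x <;> simp <;> ring_nf <;> reduce_mod_char

theorem tauPerm_mul_self : tauPerm * tauPerm = 1 := by
  ext x <;> simp

theorem rhoPerm_mul_tauPerm_mul_rhoPerm :
    rhoPerm * tauPerm * rhoPerm = tauPerm * rhoPerm * tauPerm := by
  ext x <;> simp <;> ring_nf
  reduce_mod_char

def grtFinset : Finset (Equiv.Perm (ZMod 18 × ZMod 18)) :=
  {1, rhoPerm, tauPerm, rhoPerm * tauPerm, tauPerm * rhoPerm, rhoPerm * tauPerm * rhoPerm}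

theorem mem_grtFinset_iff (p : Equiv.Perm (ZMod 18 × ZMod 18)) : p ∈ grtFinset ↔ p ∈ Grt := by
  rw [← SetLike.mem_coe (p := Grt), Grt, Subgroup.coe_closure_pair_of_braid rhoPerm_mul_self
    tauPerm_mul_self rhoPerm_mul_tauPerm_mul_rhoPerm, grtFinset]
  simp

theorem card_grtFinset : #grtFinset = 6 := by
  decide

set_option maxRecDepth 10000 in
theorem sum_card_fixed_grtFinset : ∑ p ∈ grtFinset, #{x | p x = x} = 384 := by
  decide

/-- The action of `⟨ρ,τ⟩` on `(ℤ/18ℤ)²` has exactly 64 orbits. -/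
theorem orbit_count_eighteen :
    Nat.card (MulAction.orbitRel.Quotient Grt (ZMod 18 × ZMod 18)) = 64 := by
  have burnside := Equiv.Perm.sum_card_fixed_eq_card_orbits_mul_card mem_grtFinset_iff
  rw [sum_card_fixed_grtFinset, card_grtFinset] at burnside
  omega
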